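/- arXiv:2103.10610 — 6 statements merged into one kernel-verified Lean document; each statement's English description precedes it below -/
import Mathlib

section
/- Let (p_n) be a non-negative non-increasing real sequence with p_n → 0, and define p^{(1)}_n = Σ_{j>n} p_j. If p^{(1)}_n ~ n^{-α} as n → ∞ for some α > 0, then there exists a constant ϖ > 0 such that p_n ~ ϖ n^{-α-1} as n → ∞. -/
open Filter Topology Set

lemma aux_split (p : ℕ → ℝ) (hsum : Summable p) {m n : ℕ} (h : m ≤ n) :
    (∑' j : ℕ, p (m + 1 + j)) - (∑' j : ℕ, p (n + 1 + j)) =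
      ∑ i ∈ Finset.range (n - m), p (m + 1 + i) := by
  have hs : Summable (fun j => p (j + (m + 1))) := (summable_nat_add_iff (m+1)).2 hsum
  have := Summable.sum_add_tsum_nat_add (f := fun j => p (j + (m + 1))) (n - m) hs
  have h1 : (∑' j : ℕ, p (m + 1 + j)) = ∑' j : ℕ, p (j + (m + 1)) :=
    tsum_congr fun j => by rw [add_comm]
  have h2 : (∑' j : ℕ, p (n + 1 + j)) = ∑' j : ℕ, p (j + (n - m) + (m + 1)) :=
    tsum_congr fun j => by congr 1; omega
  have h3 : ∀ i, p (i + (m + 1)) = p (m + 1 + i) := fun i => by rw [add_comm]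
  rw [h1, h2, ← this]
  simp [h3]

lemma aux_bounds (p : ℕ → ℝ) (hanti : Antitone p) (hsum : Summable p) {m n : ℕ} (h : m ≤ n) :
    ((n - m : ℕ) : ℝ) * p n ≤ (∑' j : ℕ, p (m + 1 + j)) - (∑' j : ℕ, p (n + 1 + j)) ∧
    (∑' j : ℕ, p (m + 1 + j)) - (∑' j : ℕ, p (n + 1 + j)) ≤ ((n - m : ℕ) : ℝ) * p (m + 1) := by
  rw [aux_split p hsum h]
  constructor
  · calc ((n - m : ℕ) : ℝ) * p n = ∑ _i ∈ Finset.range (n - m), p n := by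
          simp [mul_comm]
       _ ≤ ∑ i ∈ Finset.range (n - m), p (m + 1 + i) := by
          apply Finset.sum_le_sum
          intro i hi
          exact hanti (by simp at hi; omega)
  · calc (∑ i ∈ Finset.range (n - m), p (m + 1 + i)) ≤ ∑ _i ∈ Finset.range (n - m), p (m+1) := by
          apply Finset.sum_le_sum
          intro i hi
          exact hanti (by omega)
       _ = ((n - m : ℕ) : ℝ) * p (m + 1) := by simp [mul_comm]

lemma aux_slope (α : ℝ) : Tendsto (fun x : ℝ => (x ^ (-α) - 1) / (x - 1)) (𝓝[≠] (1:ℝ)) (𝓝 (-α)) := by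
  have hd : HasDerivAt (fun x : ℝ => x ^ (-α)) (-α) 1 := by
    have := Real.hasDerivAt_rpow_const (x := (1:ℝ)) (p := -α) (Or.inl one_ne_zero)
    simpa using this
  have := hasDerivAt_iff_tendsto_slope.1 hd
  apply this.congr
  intro x
  simp [slope_def_field, div_eq_div_iff]

lemma aux_theta (α c : ℝ) (hc : α < c) :
    ∃ θ : ℝ, 0 < θ ∧ θ < 1 ∧ (θ ^ (-α) - 1) / (1 - θ) < c := by
  have h1 : Tendsto (fun x : ℝ => (x ^ (-α) - 1) / (1 - x)) (𝓝[<] (1:ℝ)) (𝓝 α) := by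
    have h := ((aux_slope α).mono_left
      (nhdsWithin_mono 1 (fun x hx => ne_of_lt hx))).neg
    rw [neg_neg] at h
    apply h.congr
    intro x
    rw [show (1:ℝ) - x = -(x - 1) by ring, div_neg]
  have h2 := (h1.eventually_lt_const hc).and
    (Ioo_mem_nhdsLT_of_mem (show (1:ℝ) ∈ Ioc (0:ℝ) 1 by simp))
  obtain ⟨θ, hθc, hθ0, hθ1⟩ := h2.exists
  exact ⟨θ, hθ0, hθ1, hθc⟩

lemma aux_lam (α c : ℝ) (hc : c < α) :
    ∃ l : ℝ, 1 < l ∧ c < (1 - l ^ (-α)) / (l - 1) := by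
  have h1 : Tendsto (fun x : ℝ => (1 - x ^ (-α)) / (x - 1)) (𝓝[>] (1:ℝ)) (𝓝 α) := by
    have h := ((aux_slope α).mono_left
      (nhdsWithin_mono 1 (fun x hx => ne_of_gt hx))).neg
    rw [neg_neg] at h
    apply h.congr
    intro x
    rw [show (1:ℝ) - x ^ (-α) = -(x ^ (-α) - 1) by ring, neg_div]
  have h2 := (h1.eventually_const_lt hc).and self_mem_nhdsWithin
  obtain ⟨l, hlc, hl1⟩ := h2.exists
  exact ⟨l, hl1, hlc⟩

theorem stmt0 (p : ℕ → ℝ) (hnonneg : ∀ n, 0 ≤ p n) (hmono : ∀ n, p (n + 1) ≤ p n)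
    (hlim : Tendsto p atTop (nhds 0)) (hsum : Summable p)
    (α : ℝ) (hα : 0 < α)
    (htail : Tendsto (fun n : ℕ => (∑' j : ℕ, p (n + 1 + j)) / (n : ℝ) ^ (-α))
      atTop (nhds 1)) :
    ∃ ϖ : ℝ, 0 < ϖ ∧
      Tendsto (fun n : ℕ => p n / (ϖ * (n : ℝ) ^ (-α - 1))) atTop (nhds 1) := by
  have hanti : Antitone p := antitone_nat_of_succ_le hmono
  set T : ℕ → ℝ := fun n => ∑' j : ℕ, p (n + 1 + j) with hTdef
  have htail' : Tendsto (fun n : ℕ => T n / (n : ℝ) ^ (-α)) atTop (𝓝 1) := htail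
  refine ⟨α, hα, ?_⟩
  have hQ : Tendsto (fun n : ℕ => p n / (n : ℝ) ^ (-α - 1)) atTop (𝓝 α) := by
    rw [tendsto_order]
    constructor
    · -- lower bound
      intro c hc
      obtain ⟨l, hl1, hlc⟩ := aux_lam α c hc
      have hl0 : (0:ℝ) < l := by linarith
      set k : ℕ → ℕ := fun n => ⌈l * (n : ℝ)⌉₊ with hk
      have hk_to : Tendsto k atTop atTop :=
        tendsto_nat_ceil_atTop.comp
          (Tendsto.const_mul_atTop hl0 tendsto_natCast_atTop_atTop)
      have hratio : Tendsto (fun n : ℕ => ((k n : ℝ)) / (n : ℝ)) atTop (𝓝 l) :=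
        (tendsto_nat_ceil_mul_div_atTop hl0.le).comp tendsto_natCast_atTop_atTop
      have hpow : Tendsto (fun n : ℕ => ((k n : ℝ) / (n : ℝ)) ^ (-α)) atTop (𝓝 (l ^ (-α))) :=
        ((Real.continuousAt_rpow_const l (-α) (Or.inl hl0.ne')).tendsto).comp hratio
      have hLk : Tendsto (fun n : ℕ => T (k n) / ((k n : ℝ)) ^ (-α)) atTop (𝓝 1) :=
        htail'.comp hk_to
      have hTk : Tendsto (fun n : ℕ => T (k n) / (n : ℝ) ^ (-α)) atTop (𝓝 (l ^ (-α))) := by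
        have h := hLk.mul hpow
        rw [one_mul] at h
        apply h.congr'
        filter_upwards [hk_to.eventually_ge_atTop 1, eventually_ge_atTop 1] with n h1 h2
        have hkpos : (0:ℝ) < (k n : ℝ) := by exact_mod_cast h1
        have hnpos : (0:ℝ) < (n : ℝ) := by exact_mod_cast h2
        have hane : ((k n : ℝ)) ^ (-α) ≠ 0 := (Real.rpow_pos_of_pos hkpos _).ne'
        rw [Real.div_rpow hkpos.le hnpos.le]
        field_simp
      have hfrac : Tendsto (fun n : ℕ => (n : ℝ) / ((k n : ℝ) - (n : ℝ))) atTop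
          (𝓝 (1 / (l - 1))) := by
        have h1 : Tendsto (fun n : ℕ => (k n : ℝ) / (n : ℝ) - 1) atTop (𝓝 (l - 1)) :=
          hratio.sub tendsto_const_nhds
        have h2 := h1.inv₀ (by linarith : l - 1 ≠ 0)
        rw [one_div]
        apply h2.congr'
        filter_upwards [eventually_ge_atTop 1] with n hn
        have hnpos : (0:ℝ) < (n : ℝ) := by exact_mod_cast hn
        rw [show (k n : ℝ) / (n:ℝ) - 1 = ((k n : ℝ) - (n:ℝ)) / (n:ℝ) by field_simp,
          inv_div]
      have hR : Tendsto (fun n : ℕ =>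
          (T n / (n : ℝ) ^ (-α) - T (k n) / (n : ℝ) ^ (-α)) * ((n : ℝ) / ((k n : ℝ) - (n : ℝ))))
          atTop (𝓝 ((1 - l ^ (-α)) * (1 / (l - 1)))) := (htail'.sub hTk).mul hfrac
      have hRc : ∀ᶠ n in atTop,
          c < (T n / (n : ℝ) ^ (-α) - T (k n) / (n : ℝ) ^ (-α)) * ((n : ℝ) / ((k n : ℝ) - (n : ℝ))) :=
        hR.eventually_const_lt (by rw [mul_one_div]; exact hlc)
      have hklt : ∀ᶠ n in atTop, n < k n := by
        have ht : Tendsto (fun n : ℕ => (l - 1) * (n : ℝ)) atTop atTop :=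
          Tendsto.const_mul_atTop (by linarith) tendsto_natCast_atTop_atTop
        filter_upwards [ht.eventually_ge_atTop 1] with n hn
        have : (n : ℝ) + 1 ≤ l * (n : ℝ) := by nlinarith
        have h2 : (n : ℝ) < (k n : ℝ) := by
          have := Nat.le_ceil (l * (n : ℝ))
          linarith
        exact_mod_cast h2
      filter_upwards [hRc, hklt, eventually_ge_atTop 1] with n hRn hkn hn1
      have hnpos : (0:ℝ) < (n : ℝ) := by exact_mod_cast hn1
      have key : T n - T (k n) ≤ ((k n - n : ℕ) : ℝ) * p (n + 1) :=
        (aux_bounds p hanti hsum hkn.le).2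
      have key2 : T n - T (k n) ≤ ((k n - n : ℕ) : ℝ) * p n :=
        key.trans (mul_le_mul_of_nonneg_left (hmono n) (by positivity))
      have hcast : ((k n - n : ℕ) : ℝ) = (k n : ℝ) - (n : ℝ) := by
        rw [Nat.cast_sub hkn.le]
      rw [hcast] at key2
      have hb : (0:ℝ) < (k n : ℝ) - (n : ℝ) := by
        have : (n : ℝ) < (k n : ℝ) := by exact_mod_cast hkn
        linarith
      have ha : (0:ℝ) < (n : ℝ) ^ (-α) := Real.rpow_pos_of_pos hnpos _
      have hrw : p n / (n : ℝ) ^ (-α - 1) = p n * (n : ℝ) / (n : ℝ) ^ (-α) := by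
        rw [show -α - 1 = -α + (-1) by ring, Real.rpow_add hnpos, Real.rpow_neg_one]
        field_simp
      rw [hrw]
      refine lt_of_lt_of_le hRn ?_
      rw [← sub_div, div_mul_div_comm, div_le_div_iff₀ (by positivity) ha]
      nlinarith [mul_nonneg (mul_nonneg hnpos.le ha.le) (sub_nonneg.2 key2),
        mul_pos hnpos ha]
    · -- upper bound
      intro c hc
      obtain ⟨θ, hθ0, hθ1, hθc⟩ := aux_theta α c hc
      set m : ℕ → ℕ := fun n => ⌊θ * (n : ℝ)⌋₊ with hm
      have hm_to : Tendsto m atTop atTop := tendsto_nat_floor_mul_atTop θ hθ0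
      have hratio : Tendsto (fun n : ℕ => ((m n : ℝ)) / (n : ℝ)) atTop (𝓝 θ) :=
        (tendsto_nat_floor_mul_div_atTop hθ0.le).comp tendsto_natCast_atTop_atTop
      have hpow : Tendsto (fun n : ℕ => ((m n : ℝ) / (n : ℝ)) ^ (-α)) atTop (𝓝 (θ ^ (-α))) :=
        ((Real.continuousAt_rpow_const θ (-α) (Or.inl hθ0.ne')).tendsto).comp hratio
      have hLm : Tendsto (fun n : ℕ => T (m n) / ((m n : ℝ)) ^ (-α)) atTop (𝓝 1) :=
        htail'.comp hm_to
      have hTm : Tendsto (fun n : ℕ => T (m n) / (n : ℝ) ^ (-α)) atTop (𝓝 (θ ^ (-α))) := by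
        have h := hLm.mul hpow
        rw [one_mul] at h
        apply h.congr'
        filter_upwards [hm_to.eventually_ge_atTop 1, eventually_ge_atTop 1] with n h1 h2
        have hmpos : (0:ℝ) < (m n : ℝ) := by exact_mod_cast h1
        have hnpos : (0:ℝ) < (n : ℝ) := by exact_mod_cast h2
        have hane : ((m n : ℝ)) ^ (-α) ≠ 0 := (Real.rpow_pos_of_pos hmpos _).ne'
        rw [Real.div_rpow hmpos.le hnpos.le]
        field_simp
      have hfrac : Tendsto (fun n : ℕ => (n : ℝ) / ((n : ℝ) - (m n : ℝ))) atTop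
          (𝓝 (1 / (1 - θ))) := by
        have h1 : Tendsto (fun n : ℕ => 1 - (m n : ℝ) / (n : ℝ)) atTop (𝓝 (1 - θ)) :=
          tendsto_const_nhds.sub hratio
        have h2 := h1.inv₀ (by linarith : (1:ℝ) - θ ≠ 0)
        rw [one_div]
        apply h2.congr'
        filter_upwards [eventually_ge_atTop 1] with n hn
        have hnpos : (0:ℝ) < (n : ℝ) := by exact_mod_cast hn
        rw [show (1:ℝ) - (m n : ℝ) / (n:ℝ) = ((n:ℝ) - (m n : ℝ)) / (n:ℝ) by field_simp,
          inv_div]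
      have hR : Tendsto (fun n : ℕ =>
          (T (m n) / (n : ℝ) ^ (-α) - T n / (n : ℝ) ^ (-α)) * ((n : ℝ) / ((n : ℝ) - (m n : ℝ))))
          atTop (𝓝 ((θ ^ (-α) - 1) * (1 / (1 - θ)))) := (hTm.sub htail').mul hfrac
      have hRc : ∀ᶠ n in atTop,
          (T (m n) / (n : ℝ) ^ (-α) - T n / (n : ℝ) ^ (-α)) * ((n : ℝ) / ((n : ℝ) - (m n : ℝ))) < c :=
        hR.eventually_lt_const (by rw [mul_one_div]; exact hθc)
      have hmlt : ∀ᶠ n in atTop, m n < n := by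
        filter_upwards [eventually_ge_atTop 1] with n hn
        have hnpos : (0:ℝ) < (n : ℝ) := by exact_mod_cast hn
        have h1 : (m n : ℝ) ≤ θ * n := Nat.floor_le (by positivity)
        have h2 : (m n : ℝ) < n := lt_of_le_of_lt h1 (by nlinarith)
        exact_mod_cast h2
      filter_upwards [hRc, hmlt, eventually_ge_atTop 1] with n hRn hmn hn1
      have hnpos : (0:ℝ) < (n : ℝ) := by exact_mod_cast hn1
      have key : ((n - m n : ℕ) : ℝ) * p n ≤ T (m n) - T n :=
        (aux_bounds p hanti hsum hmn.le).1
      have hcast : ((n - m n : ℕ) : ℝ) = (n : ℝ) - (m n : ℝ) := by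
        rw [Nat.cast_sub hmn.le]
      rw [hcast] at key
      have hb : (0:ℝ) < (n : ℝ) - (m n : ℝ) := by
        have : (m n : ℝ) < (n : ℝ) := by exact_mod_cast hmn
        linarith
      have ha : (0:ℝ) < (n : ℝ) ^ (-α) := Real.rpow_pos_of_pos hnpos _
      have hrw : p n / (n : ℝ) ^ (-α - 1) = p n * (n : ℝ) / (n : ℝ) ^ (-α) := by
        rw [show -α - 1 = -α + (-1) by ring, Real.rpow_add hnpos, Real.rpow_neg_one]
        field_simp
      rw [hrw]
      refine lt_of_le_of_lt ?_ hRn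
      rw [← sub_div, div_mul_div_comm, div_le_div_iff₀ ha (by positivity)]
      nlinarith [mul_nonneg (mul_nonneg hnpos.le ha.le) (sub_nonneg.2 key),
        mul_pos hnpos ha]
  have hfin := hQ.div_const α
  rw [div_self hα.ne'] at hfin
  apply hfin.congr
  intro n
  rw [div_div, mul_comm]
end

section
/- Let (p_n) be a non-negative non-increasing real sequence with p_n → 0. If Σ_{k=1}^n k·p_k ~ n^{2-α} as n → ∞ for some 0 < α < 2, then p_n ~ (2-α)·n^{-α} as n → ∞. -/
open Filter Topology Finset

/-!
For antitone `p`, the `k`-weighted average of `p` over a block `(m, n]` lies between `p n` and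
`p m`. If `S n = ∑_{k ≤ n} k p_k ~ c n^β`, the average over the block between `n` and `⌊ρ n⌋`
is asymptotic to `L(ρ) n^{β-2}` with `L(ρ) = (c ρ^β - c) / (ρ²/2 - 1/2)`. Hence
`liminf p n n^{2-β} ≥ L(ρ)` for `ρ > 1` and `limsup p n n^{2-β} ≤ L(ρ)` for `ρ < 1`. As `ρ → 1`,
`L(ρ)` tends to the ratio of the derivatives at `1`, namely `c β`.
-/

lemma tendsto_div_sub_div_sub_of_hasDerivAt {f g : ℝ → ℝ} {f' g' a : ℝ}
    (hf : HasDerivAt f f' a) (hg : HasDerivAt g g' a) (hg' : g' ≠ 0) :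
    Tendsto (fun x => (f x - f a) / (g x - g a)) (𝓝[≠] a) (𝓝 (f' / g')) := by
  refine ((hasDerivAt_iff_tendsto_slope.1 hf).div (hasDerivAt_iff_tendsto_slope.1 hg) hg').congr'
    ?_
  filter_upwards [self_mem_nhdsWithin] with x hx
  have hx : x - a ≠ 0 := sub_ne_zero.2 hx
  simp only [Pi.div_apply, slope_def_field]
  field_simp

lemma tendsto_of_squeeze_family {ι : Type*} {l : Filter ι} {f : ι → ℝ} {q : ℝ → ι → ℝ}
    {L : ℝ → ℝ} {a b : ℝ} (hL : Tendsto L (𝓝[≠] a) (𝓝 b))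
    (hq : ∀ᶠ ρ in 𝓝[≠] a, Tendsto (q ρ) l (𝓝 (L ρ)))
    (hlow : ∀ᶠ ρ in 𝓝[>] a, ∀ᶠ n in l, q ρ n ≤ f n)
    (hup : ∀ᶠ ρ in 𝓝[<] a, ∀ᶠ n in l, f n ≤ q ρ n) :
    Tendsto f l (𝓝 b) := by
  refine tendsto_order.2 ⟨fun c hc => ?_, fun c hc => ?_⟩
  · obtain ⟨ρ, ⟨hcρ, hqρ⟩, hlowρ⟩ :=
      ((((hL.mono_left (nhdsGT_le_nhdsNE a)).eventually (lt_mem_nhds hc)).and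
        (hq.filter_mono (nhdsGT_le_nhdsNE a))).and hlow).exists
    filter_upwards [hqρ.eventually (lt_mem_nhds hcρ), hlowρ] with n h1 h2
    linarith
  · obtain ⟨ρ, ⟨hcρ, hqρ⟩, hupρ⟩ :=
      ((((hL.mono_left (nhdsLT_le_nhdsNE a)).eventually (gt_mem_nhds hc)).and
        (hq.filter_mono (nhdsLT_le_nhdsNE a))).and hup).exists
    filter_upwards [hqρ.eventually (gt_mem_nhds hcρ), hupρ] with n h1 h2
    linarith

lemma tendsto_floor_mul_div_rpow {S : ℕ → ℝ} {β c : ℝ}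
    (hS : Tendsto (fun n : ℕ => S n / (n : ℝ) ^ β) atTop (𝓝 c)) {ρ : ℝ} (hρ : 0 < ρ) :
    Tendsto (fun n : ℕ => S ⌊ρ * n⌋₊ / (n : ℝ) ^ β) atTop (𝓝 (c * ρ ^ β)) := by
  have hfloor : Tendsto (fun n : ℕ => ⌊ρ * n⌋₊) atTop atTop := tendsto_nat_floor_mul_atTop ρ hρ
  have hratio : Tendsto (fun n : ℕ => ((⌊ρ * n⌋₊ : ℝ) / n) ^ β) atTop (𝓝 (ρ ^ β)) :=
    ((tendsto_nat_floor_mul_div_atTop hρ.le).comp tendsto_natCast_atTop_atTop).rpow_const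
      (Or.inl hρ.ne')
  refine ((hS.comp hfloor).mul hratio).congr' ?_
  filter_upwards [hfloor.eventually_ge_atTop 1, eventually_ge_atTop 1] with n hm hn
  have hm : (0 : ℝ) < ⌊ρ * n⌋₊ := by exact_mod_cast hm
  have hn : (0 : ℝ) < n := by exact_mod_cast hn
  have := Real.rpow_pos_of_pos hm β
  simp only [Function.comp_apply, Real.div_rpow hm.le hn.le]
  field_simp

def momentSum (p : ℕ → ℝ) (n : ℕ) : ℝ := ∑ k ∈ Icc 1 n, (k : ℝ) * p k

lemma momentSum_sub_momentSum (p : ℕ → ℝ) {m n : ℕ} (h : m ≤ n) :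
    momentSum p n - momentSum p m = ∑ k ∈ Ioc m n, (k : ℝ) * p k := by
  have hIcc : ∀ j : ℕ, Icc 1 j = Ioc 0 j := Finset.Icc_succ_left_eq_Ioc 0
  rw [momentSum, momentSum, hIcc, hIcc, ← sum_Ioc_consecutive _ (Nat.zero_le m) h]
  ring

lemma momentSum_one (n : ℕ) : momentSum 1 n = n * (n + 1) / 2 := by
  induction n with
  | zero => simp [momentSum]
  | succ n ih =>
    rw [momentSum, sum_Icc_succ_top (by omega), ← momentSum, ih]
    push_cast [Pi.one_apply]
    ring

lemma tendsto_momentSum_one_div_rpow_two :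
    Tendsto (fun n : ℕ => momentSum 1 n / (n : ℝ) ^ (2 : ℝ)) atTop (𝓝 (1 / 2)) := by
  have h := (tendsto_const_nhds (x := (1 : ℝ)).add tendsto_one_div_atTop_nhds_zero_nat).div_const 2
  rw [add_zero] at h
  refine h.congr' ?_
  filter_upwards [eventually_gt_atTop 0] with n hn
  have hn : (n : ℝ) ≠ 0 := by positivity
  rw [momentSum_one, Real.rpow_two]
  field_simp

section Antitone

variable {p : ℕ → ℝ} {m n : ℕ}

lemma momentSum_one_sub_pos (h : m < n) : 0 < momentSum 1 n - momentSum 1 m := by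
  have h : (m : ℝ) + 1 ≤ n := by exact_mod_cast h
  rw [momentSum_one, momentSum_one]
  nlinarith [m.cast_nonneg (α := ℝ)]

lemma momentSum_one_sub_mul_le (hp : Antitone p) (h : m ≤ n) :
    (momentSum 1 n - momentSum 1 m) * p n ≤ momentSum p n - momentSum p m := by
  rw [momentSum_sub_momentSum _ h, momentSum_sub_momentSum _ h, sum_mul]
  refine sum_le_sum fun k hk => ?_
  simpa using mul_le_mul_of_nonneg_left (hp (mem_Ioc.1 hk).2) k.cast_nonneg

lemma momentSum_sub_le_mul (hp : Antitone p) (h : m ≤ n) :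
    momentSum p n - momentSum p m ≤ (momentSum 1 n - momentSum 1 m) * p m := by
  rw [momentSum_sub_momentSum _ h, momentSum_sub_momentSum _ h, sum_mul]
  refine sum_le_sum fun k hk => ?_
  simpa using mul_le_mul_of_nonneg_left (hp (mem_Ioc.1 hk).1.le) k.cast_nonneg

lemma le_momentSum_sub_div (hp : Antitone p) (h : m < n) :
    p n ≤ (momentSum p n - momentSum p m) / (momentSum 1 n - momentSum 1 m) :=
  (le_div_iff₀' (momentSum_one_sub_pos h)).2 (momentSum_one_sub_mul_le hp h.le)

lemma momentSum_sub_div_le (hp : Antitone p) (h : m < n) :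
    (momentSum p n - momentSum p m) / (momentSum 1 n - momentSum 1 m) ≤ p m :=
  (div_le_iff₀' (momentSum_one_sub_pos h)).2 (momentSum_sub_le_mul hp h.le)

end Antitone

/-- The `k`-weighted average of `p` over the indices between `n` and `⌊ρ n⌋` (either order). -/
noncomputable def blockAverage (p : ℕ → ℝ) (ρ : ℝ) (n : ℕ) : ℝ :=
  (momentSum p ⌊ρ * n⌋₊ - momentSum p n) / (momentSum 1 ⌊ρ * n⌋₊ - momentSum 1 n)

lemma tendsto_blockAverage_mul_rpow {p : ℕ → ℝ} {β c ρ : ℝ}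
    (hS : Tendsto (fun n : ℕ => momentSum p n / (n : ℝ) ^ β) atTop (𝓝 c))
    (hρ0 : 0 < ρ) (hρ1 : ρ ≠ 1) :
    Tendsto (fun n : ℕ => blockAverage p ρ n * (n : ℝ) ^ (2 - β)) atTop
      (𝓝 ((c * ρ ^ β - c) / (1 / 2 * ρ ^ (2 : ℝ) - 1 / 2))) := by
  have hden : 1 / 2 * ρ ^ (2 : ℝ) - 1 / 2 ≠ 0 := by
    rw [Real.rpow_two]
    intro h
    have : ρ ^ 2 = 1 ^ 2 := by linarith
    exact hρ1 ((pow_left_inj₀ hρ0.le zero_le_one two_ne_zero).1 this)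
  have hG := tendsto_momentSum_one_div_rpow_two
  refine (((tendsto_floor_mul_div_rpow hS hρ0).sub hS).div
    ((tendsto_floor_mul_div_rpow hG hρ0).sub hG) hden).congr' ?_
  filter_upwards [eventually_gt_atTop 0] with n hn
  have hn : (0 : ℝ) < n := by exact_mod_cast hn
  simp only [Pi.div_apply, blockAverage, Real.rpow_sub hn]
  rw [div_sub_div_same, div_sub_div_same, div_div_div_eq, div_mul_div_comm, mul_comm _ (_ - _)]

section Antitone

variable {p : ℕ → ℝ} {ρ : ℝ}

lemma eventually_le_blockAverage (hp : Antitone p) (hρ0 : 0 < ρ) (hρ1 : ρ < 1) :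
    ∀ᶠ n in atTop, p n ≤ blockAverage p ρ n := by
  filter_upwards [eventually_gt_atTop 0] with n hn
  have hn : (0 : ℝ) < n := by exact_mod_cast hn
  have hlt : ⌊ρ * n⌋₊ < n := (Nat.floor_lt (by positivity)).2 (by nlinarith)
  rw [blockAverage, ← neg_sub, ← neg_sub (momentSum 1 n), neg_div_neg_eq]
  exact le_momentSum_sub_div hp hlt

lemma eventually_blockAverage_le (hp : Antitone p) (hρ1 : 1 < ρ) :
    ∀ᶠ n in atTop, blockAverage p ρ n ≤ p n := by
  have h : Tendsto (fun n : ℕ => (ρ - 1) * n) atTop atTop :=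
    tendsto_natCast_atTop_atTop.const_mul_atTop (by linarith)
  filter_upwards [h.eventually_ge_atTop 1] with n hn
  have hlt : n < ⌊ρ * n⌋₊ := Nat.lt_of_lt_of_le n.lt_succ_self (Nat.le_floor (by push_cast; linarith))
  exact momentSum_sub_div_le hp hlt

end Antitone

theorem tendsto_mul_rpow_of_tendsto_momentSum_div_rpow {p : ℕ → ℝ} (hp : Antitone p) {β c : ℝ}
    (hS : Tendsto (fun n : ℕ => momentSum p n / (n : ℝ) ^ β) atTop (𝓝 c)) :
    Tendsto (fun n : ℕ => p n * (n : ℝ) ^ (2 - β)) atTop (𝓝 (c * β)) := by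
  have hL : Tendsto (fun ρ : ℝ => (c * ρ ^ β - c) / (1 / 2 * ρ ^ (2 : ℝ) - 1 / 2)) (𝓝[≠] 1)
      (𝓝 (c * β)) := by
    have h := tendsto_div_sub_div_sub_of_hasDerivAt
      ((Real.hasDerivAt_rpow_const (p := β) (Or.inl one_ne_zero)).const_mul c)
      ((Real.hasDerivAt_rpow_const (p := 2) (Or.inl one_ne_zero)).const_mul (1 / 2))
      (by norm_num)
    simpa using h
  refine tendsto_of_squeeze_family hL (q := fun ρ n => blockAverage p ρ n * (n : ℝ) ^ (2 - β))
    ?_ ?_ ?_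
  · filter_upwards [self_mem_nhdsWithin, nhdsWithin_le_nhds (lt_mem_nhds one_pos)]
      with ρ hρ1 hρ0 using tendsto_blockAverage_mul_rpow hS hρ0 hρ1
  · filter_upwards [self_mem_nhdsWithin] with ρ hρ1
    filter_upwards [eventually_blockAverage_le hp hρ1] with n hn
    exact mul_le_mul_of_nonneg_right hn (by positivity)
  · filter_upwards [Ioo_mem_nhdsLT one_pos] with ρ ⟨hρ0, hρ1⟩
    filter_upwards [eventually_le_blockAverage hp hρ0 hρ1] with n hn
    exact mul_le_mul_of_nonneg_right hn (by positivity)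

theorem stmt1_general (p : ℕ → ℝ) (hmono : ∀ n, p (n + 1) ≤ p n)
    (α : ℝ) (hα2 : α < 2)
    (hsum : Tendsto (fun n : ℕ => (∑ k ∈ Finset.Icc 1 n, (k : ℝ) * p k) / (n : ℝ) ^ (2 - α))
      atTop (nhds 1)) :
    Tendsto (fun n : ℕ => p n / ((2 - α) * (n : ℝ) ^ (-α))) atTop (nhds 1) := by
  have h := (tendsto_mul_rpow_of_tendsto_momentSum_div_rpow (antitone_nat_of_succ_le hmono)
    hsum).div_const (2 - α)
  rw [one_mul, div_self (by linarith), sub_sub_cancel] at h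
  refine h.congr' ?_
  filter_upwards [eventually_gt_atTop 0] with n hn
  have hn : (0 : ℝ) < n := by exact_mod_cast hn
  have := Real.rpow_pos_of_pos hn α
  rw [Real.rpow_neg hn.le]
  field_simp

theorem stmt1 (p : ℕ → ℝ) (hnonneg : ∀ n, 0 ≤ p n) (hmono : ∀ n, p (n + 1) ≤ p n)
    (hlim : Tendsto p atTop (nhds 0))
    (α : ℝ) (hα0 : 0 < α) (hα2 : α < 2)
    (hsum : Tendsto (fun n : ℕ => (∑ k ∈ Finset.Icc 1 n, (k : ℝ) * p k) / (n : ℝ) ^ (2 - α))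
      atTop (nhds 1)) :
    Tendsto (fun n : ℕ => p n / ((2 - α) * (n : ℝ) ^ (-α))) atTop (nhds 1) :=
  stmt1_general p hmono α hα2 hsum
end

section
/- Let ρ_1, …, ρ_L ≥ 0 with Σ_{ℓ=1}^L ℓ·ρ_ℓ = 1. Let A be the L×L matrix with A_{i,j} = ρ_j + [j = i-1] (Kronecker delta of j and i−1). Then the characteristic polynomial of A satisfies det(A − λI) = (−1)^L (λ^L − Σ_{j=0}^{L-1} (Σ_{ℓ=L-j}^L ρ_ℓ) λ^j). -/
/-!
Write `A = N + 𝟙 ρᵀ`, where `N` has ones on the subdiagonal. For `λ ≠ 0` the matrix `N - λ` is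
lower triangular with determinant `(-λ) ^ L`, and it maps the vector
`x ℓ = -λ⁻ᴸ (λ ^ (L - 1 - ℓ) + ⋯ + λ ^ (L - 1))` to `𝟙`, so
`A - λ = (N - λ) (1 + x ρᵀ)` and the matrix determinant lemma gives
`det (A - λ) = (-λ) ^ L (1 + ρ ⬝ x)`. Regrouping by powers of `λ` turns this into the stated
polynomial, and both sides are continuous in `λ`, which covers `λ = 0`.
-/

open Matrix Finset

namespace Matrix

variable {R : Type*} {L : ℕ}

def lowerShift (L : ℕ) (R : Type*) [Zero R] [One R] : Matrix (Fin L) (Fin L) R :=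
  of fun i j => if (j : ℕ) + 1 = i then 1 else 0

theorem lowerShift_mulVec [NonAssocSemiring R] (f : ℕ → R) (hf : f 0 = 0) (i : Fin L) :
    (lowerShift L R *ᵥ fun k => f ((k : ℕ) + 1)) i = f i := by
  rcases Nat.eq_zero_or_pos (i : ℕ) with hi | hi
  · rw [hi, hf]
    simp [mulVec, dotProduct, lowerShift, hi]
  · have hk : (i : ℕ) - 1 < L := by omega
    rw [mulVec, dotProduct, sum_eq_single_of_mem ⟨(i : ℕ) - 1, hk⟩ (mem_univ _)]
    · simp [lowerShift, Nat.sub_add_cancel hi]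
    · intro k _ hk'
      simp only [lowerShift, of_apply, ite_mul, one_mul, zero_mul]
      exact if_neg fun h => hk' (Fin.ext (by simp; omega))

theorem det_lowerShift_sub_smul_one [CommRing R] (c : R) :
    (lowerShift L R - c • 1).det = (-c) ^ L := by
  rw [det_of_isLowerTriangular]
  · simp [lowerShift]
  · intro i j (hij : i < j)
    have : ¬ (j : ℕ) + 1 = i := by omega
    simp [lowerShift, this, one_apply_ne hij.ne]

end Matrix

section TailPowSum

variable {R : Type*} [Semiring R]

def tailPowSum (x : R) (L i : ℕ) : R := ∑ j ∈ Ico (L - i) L, x ^ j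

theorem tailPowSum_zero (x : R) (L : ℕ) : tailPowSum x L 0 = 0 := by
  simp [tailPowSum]

theorem mul_tailPowSum_succ (x : R) {L i : ℕ} (hi : i < L) :
    x * tailPowSum x L (i + 1) = tailPowSum x L i + x ^ L := by
  simp_rw [tailPowSum, mul_sum, ← pow_succ']
  rw [sum_Ico_add', show L - (i + 1) + 1 = L - i by omega, sum_Ico_succ_top (by omega)]

theorem sum_filter_mul_pow_eq_sum_mul_tailPowSum {L : ℕ} (ρ : Fin L → R) (x : R) :
    ∑ j : Fin L, (∑ ℓ ∈ univ.filter (fun ℓ : Fin L => L - (j : ℕ) ≤ (ℓ : ℕ) + 1), ρ ℓ)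
      * x ^ (j : ℕ) = ∑ ℓ : Fin L, ρ ℓ * tailPowSum x L ((ℓ : ℕ) + 1) := by
  simp_rw [sum_mul, sum_filter]
  rw [sum_comm]
  refine sum_congr rfl fun ℓ _ => ?_
  have hIco : (range L).filter (fun j => L - j ≤ (ℓ : ℕ) + 1) = Ico (L - ((ℓ : ℕ) + 1)) L := by
    ext j
    simp only [mem_filter, mem_range, mem_Ico]
    omega
  rw [tailPowSum, ← hIco, sum_filter, mul_sum,
    Fin.sum_univ_eq_sum_range (fun j => if L - j ≤ (ℓ : ℕ) + 1 then ρ ℓ * x ^ j else 0)]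
  simp only [mul_ite, mul_zero]

end TailPowSum

section Field

variable {K : Type*} [Field K] {L : ℕ}

theorem lowerShift_sub_smul_one_mulVec_tailPowSum {c : K} (hc : c ≠ 0) :
    (lowerShift L K - c • 1) *ᵥ (fun k : Fin L => -tailPowSum c L ((k : ℕ) + 1) / c ^ L) = 1 := by
  funext i
  rw [sub_mulVec, Pi.sub_apply,
    lowerShift_mulVec (fun n => -tailPowSum c L n / c ^ L) (by simp [tailPowSum_zero]),
    smul_mulVec, one_mulVec, Pi.smul_apply, Pi.one_apply, smul_eq_mul]
  have hrec := mul_tailPowSum_succ c i.isLt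
  field_simp
  linear_combination hrec

theorem det_lowerShift_add_vecMulVec_one_sub_smul_one (ρ : Fin L → K) {c : K} (hc : c ≠ 0) :
    (lowerShift L K + vecMulVec 1 ρ - c • 1).det
      = (-1) ^ L * (c ^ L - ∑ ℓ : Fin L, ρ ℓ * tailPowSum c L ((ℓ : ℕ) + 1)) := by
  have hfactor : lowerShift L K + vecMulVec 1 ρ - c • 1
      = (lowerShift L K - c • 1) *
          (1 + replicateCol Unit (fun k : Fin L => -tailPowSum c L ((k : ℕ) + 1) / c ^ L) *
            replicateRow Unit ρ) := by
    rw [Matrix.mul_add, Matrix.mul_one, ← Matrix.mul_assoc, ← replicateCol_mulVec,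
      lowerShift_sub_smul_one_mulVec_tailPowSum hc, ← vecMulVec_eq, add_sub_right_comm]
  rw [hfactor, det_mul, det_one_add_replicateCol_mul_replicateRow, det_lowerShift_sub_smul_one]
  simp only [dotProduct, mul_div_assoc', mul_neg, neg_div, sum_neg_distrib, ← sum_div]
  field_simp
  ring

end Field

theorem stmt3_general (L : ℕ) (ρ : Fin L → ℝ)
    (A : Matrix (Fin L) (Fin L) ℝ)
    (hA : ∀ i j, A i j = ρ j + if (j : ℕ) + 1 = (i : ℕ) then 1 else 0)
    (lam : ℝ) :
    (A - lam • (1 : Matrix (Fin L) (Fin L) ℝ)).det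
      = (-1) ^ L * (lam ^ L - ∑ j : Fin L,
          (∑ ℓ ∈ Finset.univ.filter (fun ℓ : Fin L => L - (j : ℕ) ≤ (ℓ : ℕ) + 1), ρ ℓ)
            * lam ^ (j : ℕ)) := by
  have hA' : A = lowerShift L ℝ + vecMulVec 1 ρ := by
    ext i j
    simp [hA, lowerShift, add_comm]
  rw [sum_filter_mul_pow_eq_sum_mul_tailPowSum, hA']
  refine congrFun (Continuous.ext_on (dense_compl_singleton 0) (by fun_prop) ?_
    fun t ht => det_lowerShift_add_vecMulVec_one_sub_smul_one ρ ht) lam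
  unfold tailPowSum
  fun_prop

theorem stmt3 (L : ℕ) (ρ : Fin L → ℝ) (hρ : ∀ ℓ, 0 ≤ ρ ℓ)
    (hsum : ∑ ℓ : Fin L, (((ℓ : ℕ) : ℝ) + 1) * ρ ℓ = 1)
    (A : Matrix (Fin L) (Fin L) ℝ)
    (hA : ∀ i j, A i j = ρ j + if (j : ℕ) + 1 = (i : ℕ) then 1 else 0)
    (lam : ℝ) :
    (A - lam • (1 : Matrix (Fin L) (Fin L) ℝ)).det
      = (-1) ^ L * (lam ^ L - ∑ j : Fin L,
          (∑ ℓ ∈ Finset.univ.filter (fun ℓ : Fin L => L - (j : ℕ) ≤ (ℓ : ℕ) + 1), ρ ℓ)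
            * lam ^ (j : ℕ)) :=
  stmt3_general L ρ A hA lam
end

section
/- Let ρ_1, …, ρ_L ≥ 0 with ρ_L > 0 and Σ_{ℓ=1}^L ℓ·ρ_ℓ = 1. Then every complex root λ of the polynomial λ^L − Σ_{j=0}^{L-1} (Σ_{ℓ=L-j}^L ρ_ℓ) λ^j satisfies |λ| ≤ 1, and λ = 1 is a simple root. -/
/-!
Write the polynomial as `λ^L - ∑ c_j λ^j` with `c_j ≥ 0` and, after exchanging the order of
summation, `∑ c_j = ∑ (ℓ + 1) ρ_ℓ = 1`. If `|λ| > 1`, the triangle inequality gives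
`|λ|^L ≤ ∑ c_j |λ|^j ≤ |λ|^(L-1)`, which is absurd. At `λ = 1` the value is `1 - ∑ c_j = 0` and
the derivative is `L - ∑ j c_j ≥ L - (L - 1) ∑ c_j = 1`.
-/

open Finset

/-- The coefficient `c_j = ∑_{ℓ = L - j}^{L} ρ_ℓ`, with `ρ_ℓ` stored at index `ℓ - 1`. -/
def tailSum {L : ℕ} (ρ : Fin L → ℝ) (j : Fin L) : ℝ :=
  ∑ ℓ ∈ univ.filter (fun ℓ : Fin L => L - (j : ℕ) ≤ (ℓ : ℕ) + 1), ρ ℓ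

lemma tailSum_nonneg {L : ℕ} {ρ : Fin L → ℝ} (hρ : ∀ ℓ, 0 ≤ ρ ℓ) (j : Fin L) :
    0 ≤ tailSum ρ j :=
  sum_nonneg fun ℓ _ => hρ ℓ

lemma sum_tailSum {L : ℕ} (ρ : Fin L → ℝ) :
    ∑ j, tailSum ρ j = ∑ ℓ : Fin L, (((ℓ : ℕ) : ℝ) + 1) * ρ ℓ := by
  simp only [tailSum, sum_filter]
  rw [sum_comm]
  refine sum_congr rfl fun ℓ _ => ?_
  have hIco : (range L).filter (fun j => L - j ≤ (ℓ : ℕ) + 1) = Ico (L - ((ℓ : ℕ) + 1)) L := by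
    ext j
    simp only [mem_filter, mem_range, mem_Ico]
    omega
  rw [Fin.sum_univ_eq_sum_range (fun j => if L - j ≤ (ℓ : ℕ) + 1 then ρ ℓ else 0) L, ← sum_filter,
    hIco, sum_const, Nat.card_Ico, show L - (L - ((ℓ : ℕ) + 1)) = (ℓ : ℕ) + 1 by omega,
    nsmul_eq_mul]
  push_cast
  ring

section RootsOfConvexRecurrence

variable {n : ℕ} {c : Fin n → ℝ}

lemma norm_le_one_of_pow_sub_sum_eq_zero (hc : ∀ j, 0 ≤ c j) (hsum : ∑ j, c j = 1) {z : ℂ}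
    (hz : z ^ n - ∑ j, (c j : ℂ) * z ^ (j : ℕ) = 0) : ‖z‖ ≤ 1 := by
  have hn : 0 < n := Nat.pos_of_ne_zero (by rintro rfl; simp at hsum)
  by_contra! hgt
  have hbound : ‖z‖ ^ n ≤ ‖z‖ ^ (n - 1) :=
    calc ‖z‖ ^ n = ‖∑ j, (c j : ℂ) * z ^ (j : ℕ)‖ := by rw [← norm_pow, sub_eq_zero.mp hz]
      _ ≤ ∑ j, c j * ‖z‖ ^ (j : ℕ) := by
          refine (norm_sum_le _ _).trans_eq (sum_congr rfl fun j _ => ?_)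
          rw [norm_mul, norm_pow, Complex.norm_real, Real.norm_of_nonneg (hc j)]
      _ ≤ ∑ j, c j * ‖z‖ ^ (n - 1) :=
          sum_le_sum fun j _ =>
            mul_le_mul_of_nonneg_left (pow_le_pow_right₀ hgt.le (by omega)) (hc j)
      _ = ‖z‖ ^ (n - 1) := by rw [← sum_mul, hsum, one_mul]
  exact hbound.not_gt (pow_lt_pow_right₀ hgt (by omega))

lemma one_pow_sub_sum_eq_zero (hsum : ∑ j, c j = 1) :
    (1 : ℂ) ^ n - ∑ j, (c j : ℂ) * 1 ^ (j : ℕ) = 0 := by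
  simp only [one_pow, mul_one]
  exact_mod_cast sub_eq_zero.mpr hsum.symm

lemma sum_mul_index_lt (hc : ∀ j, 0 ≤ c j) (hsum : ∑ j, c j = 1) :
    ∑ j : Fin n, c j * ((j : ℕ) : ℝ) < n := by
  have hshift : ∑ j, c j * (((j : ℕ) : ℝ) + 1) ≤ ∑ j, c j * n :=
    sum_le_sum fun j _ => mul_le_mul_of_nonneg_left (by exact_mod_cast j.isLt) (hc j)
  simp only [mul_add_one, sum_add_distrib, ← sum_mul, hsum, one_mul] at hshift
  linarith

lemma deriv_pow_sub_sum_one_ne_zero (hc : ∀ j, 0 ≤ c j) (hsum : ∑ j, c j = 1) :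
    deriv (fun z : ℂ => z ^ n - ∑ j, (c j : ℂ) * z ^ (j : ℕ)) 1 ≠ 0 := by
  have hderiv : HasDerivAt (fun z : ℂ => z ^ n - ∑ j, (c j : ℂ) * z ^ (j : ℕ))
      (((n - ∑ j : Fin n, c j * ((j : ℕ) : ℝ) : ℝ)) : ℂ) 1 := by
    refine ((hasDerivAt_pow n 1).fun_sub (HasDerivAt.fun_sum (u := univ) fun (j : Fin n) _ =>
      (hasDerivAt_pow (j : ℕ) 1).const_mul (c j : ℂ))).congr_deriv ?_
    simp
  rw [hderiv.deriv, Complex.ofReal_ne_zero, sub_ne_zero]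
  exact (sum_mul_index_lt hc hsum).ne'

end RootsOfConvexRecurrence

theorem stmt4 (L : ℕ) (ρ : Fin L → ℝ) (hρ : ∀ ℓ, 0 ≤ ρ ℓ)
    (hsum : ∑ ℓ : Fin L, (((ℓ : ℕ) : ℝ) + 1) * ρ ℓ = 1) :
    (∀ lam : ℂ,
        lam ^ L - (∑ j : Fin L,
          ((∑ ℓ ∈ Finset.univ.filter (fun ℓ : Fin L => L - (j : ℕ) ≤ (ℓ : ℕ) + 1), ρ ℓ : ℝ) : ℂ)
            * lam ^ (j : ℕ)) = 0 → ‖lam‖ ≤ 1) ∧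
      (1 : ℂ) ^ L - (∑ j : Fin L,
          ((∑ ℓ ∈ Finset.univ.filter (fun ℓ : Fin L => L - (j : ℕ) ≤ (ℓ : ℕ) + 1), ρ ℓ : ℝ) : ℂ)
            * 1 ^ (j : ℕ)) = 0 ∧
      deriv (fun lam : ℂ => lam ^ L - (∑ j : Fin L,
          ((∑ ℓ ∈ Finset.univ.filter (fun ℓ : Fin L => L - (j : ℕ) ≤ (ℓ : ℕ) + 1), ρ ℓ : ℝ) : ℂ)
            * lam ^ (j : ℕ))) 1 ≠ 0 := by
  have hc := tailSum_nonneg hρ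
  have hcsum : ∑ j, tailSum ρ j = 1 := (sum_tailSum ρ).trans hsum
  exact ⟨fun _ => norm_le_one_of_pow_sub_sum_eq_zero hc hcsum,
    one_pow_sub_sum_eq_zero hcsum, deriv_pow_sub_sum_one_ne_zero hc hcsum⟩
end

section
/- Let the random walk (X_n) on ℤ take steps in {−L,…,−1,1}. For n ≥ 1 let T_n be the first hitting time of site n, and for 0 ≤ i ≤ n−1 and ℓ ∈ [L] let V^n_{i,ℓ} be the number of jumps before time T_n from a site in {i+1, i+2, …} to site i−ℓ+1. Then on the event {T_n < ∞}, T_n = n + 2·Σ_{i<n} V^n_{i,1} + Σ_{i<n} Σ_{ℓ=2}^L V^n_{i,ℓ}, where the sums over i range over all integers i ≤ n−1. -/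
/-!
A step of the walk is either `+1` (put `m = 0`) or a jump down by some `m ∈ [1, L]`; in both cases
`1 = (X (k+1) - X k) + 2 · 1{m ≥ 1} + #{ℓ ∈ [2, L] : ℓ ≤ m}`. Summing over `k < T` gives
`T = n + 2 · #{jumps} + Σ_{ℓ ≥ 2} #{jumps of size ≥ ℓ}`. A jump of size `≥ ℓ` is counted by
`V i ℓ` for exactly one `i`, namely `i = X (k+1) + ℓ - 1`, and `i ≤ n - 1` since the walk, being
skip-free upwards, stays below `n` before `T`.
-/

open Finset

theorem lt_of_forall_ne_of_le_add_one {X : ℕ → ℤ} {n : ℤ} {T : ℕ} (h0 : X 0 ≤ n)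
    (hstep : ∀ k, X (k + 1) ≤ X k + 1) (hne : ∀ k < T, X k ≠ n) :
    ∀ k < T, X k < n := by
  intro k hk
  induction k with
  | zero => exact lt_of_le_of_ne h0 (hne 0 hk)
  | succ k ih => exact lt_of_le_of_ne ((hstep k).trans (ih (by omega))) (hne _ hk)

theorem tsum_card_filter_eq_card {α β : Type*} [DecidableEq β] (s : Finset α) (g : α → β) :
    ∑' b, ((s.filter (g · = b)).card : ℝ) = s.card := by
  rw [tsum_eq_sum (s := s.image g), card_eq_sum_card_fiberwise (fun _ ↦ mem_image_of_mem g)]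
  · push_cast; rfl
  · intro b hb
    simp only [Nat.cast_eq_zero, card_eq_zero, filter_eq_empty_iff]
    exact fun a ha hab ↦ hb (mem_image.mpr ⟨a, ha, hab⟩)

theorem tsum_card_filter_jump_eq_card (X : ℕ → ℤ) (s : Finset ℕ) (n : ℤ) (ℓ : ℕ)
    (hX : ∀ k ∈ s, X k ≤ n) :
    ∑' i : ℤ, (if i ≤ n - 1 then
        ((s.filter (fun k => i < X k ∧ X (k + 1) = i - ℓ + 1)).card : ℝ) else 0) =
      (s.filter (fun k => X (k + 1) + ℓ ≤ X k)).card := by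
  rw [← tsum_card_filter_eq_card _ (fun k => X (k + 1) + ℓ - 1)]
  congr 1 with i
  have hfiber : (s.filter (fun k => X (k + 1) + ℓ ≤ X k)).filter
      (fun k => X (k + 1) + ℓ - 1 = i) = s.filter (fun k => i < X k ∧ X (k + 1) = i - ℓ + 1) := by
    rw [filter_filter]
    exact filter_congr fun k _ ↦ by omega
  rw [hfiber]
  split_ifs with hi
  · rfl
  · rw [eq_comm, Nat.cast_eq_zero, card_eq_zero, filter_eq_empty_iff]
    intro k hk
    have := hX k hk
    omega

theorem one_eq_sub_add_two_mul_add_sum {L : ℕ} {x y : ℤ}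
    (hxy : y = x + 1 ∨ ∃ ℓ : ℕ, 1 ≤ ℓ ∧ ℓ ≤ L ∧ y = x - ℓ) :
    (1 : ℤ) = (y - x) + 2 * (if y + 1 ≤ x then 1 else 0)
      + ∑ ℓ ∈ Icc 2 L, if y + ℓ ≤ x then 1 else 0 := by
  rw [sum_boole]
  rcases hxy with rfl | ⟨m, hm1, hmL, rfl⟩
  · rw [filter_false_of_mem fun ℓ _ ↦ by omega]
    simp
  · have : (Icc 2 L).filter (fun ℓ : ℕ => x - m + ℓ ≤ x) = Icc 2 m := by
      ext ℓ; simp only [mem_filter, mem_Icc]; omega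
    rw [this, Nat.card_Icc, if_pos (by omega)]
    omega

theorem natCast_eq_sub_add_card_jumps {L : ℕ} {X : ℕ → ℤ}
    (hstep : ∀ k, X (k + 1) = X k + 1 ∨ ∃ ℓ : ℕ, 1 ≤ ℓ ∧ ℓ ≤ L ∧ X (k + 1) = X k - ℓ) (T : ℕ) :
    (T : ℤ) = (X T - X 0) + 2 * ((range T).filter (fun k => X (k + 1) + 1 ≤ X k)).card
      + ∑ ℓ ∈ Icc 2 L, ((range T).filter (fun k => X (k + 1) + ℓ ≤ X k)).card := by
  calc (T : ℤ) = ∑ k ∈ range T, 1 := by simp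
    _ = ∑ k ∈ range T, ((X (k + 1) - X k) + 2 * (if X (k + 1) + 1 ≤ X k then 1 else 0)
          + ∑ ℓ ∈ Icc 2 L, if X (k + 1) + ℓ ≤ X k then 1 else 0) :=
      sum_congr rfl fun k _ ↦ one_eq_sub_add_two_mul_add_sum (hstep k)
    _ = _ := by
      rw [sum_add_distrib, sum_add_distrib, sum_range_sub, ← mul_sum, sum_comm, sum_boole]
      simp [sum_boole]

theorem stmt13_general (L : ℕ) (X : ℕ → ℤ) (hX0 : X 0 = 0)
    (hstep : ∀ k, X (k + 1) = X k + 1 ∨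
      ∃ ℓ : ℕ, 1 ≤ ℓ ∧ ℓ ≤ L ∧ X (k + 1) = X k - ℓ)
    (n : ℕ) (T : ℕ) (hT : X T = n) (hTmin : ∀ k < T, X k ≠ (n : ℤ))
    (V : ℤ → ℕ → ℕ)
    (hV : ∀ i ℓ, V i ℓ = ((Finset.range T).filter
        (fun k => i < X k ∧ X (k + 1) = i - ℓ + 1)).card) :
    (T : ℝ) = n + 2 * (∑' i : ℤ, if i ≤ (n : ℤ) - 1 then (V i 1 : ℝ) else 0)
      + ∑ ℓ ∈ Finset.Icc 2 L, ∑' i : ℤ, if i ≤ (n : ℤ) - 1 then (V i ℓ : ℝ) else 0 := by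
  have hlt := lt_of_forall_ne_of_le_add_one (by omega)
    (fun k ↦ by rcases hstep k with h | ⟨ℓ, -, -, h⟩ <;> omega) hTmin
  have hcount (ℓ : ℕ) := tsum_card_filter_jump_eq_card X (range T) n ℓ
    (fun k hk ↦ (hlt k (mem_range.mp hk)).le)
  have hT' := natCast_eq_sub_add_card_jumps hstep T
  rw [hT, hX0, sub_zero] at hT'
  simp only [hV, hcount]
  exact_mod_cast hT'

theorem stmt13 (L : ℕ) (hL : 0 < L) (X : ℕ → ℤ) (hX0 : X 0 = 0)
    (hstep : ∀ k, X (k + 1) = X k + 1 ∨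
      ∃ ℓ : ℕ, 1 ≤ ℓ ∧ ℓ ≤ L ∧ X (k + 1) = X k - ℓ)
    (n : ℕ) (hn : 1 ≤ n) (T : ℕ) (hT : X T = n) (hTmin : ∀ k < T, X k ≠ (n : ℤ))
    (V : ℤ → ℕ → ℕ)
    (hV : ∀ i ℓ, V i ℓ = ((Finset.range T).filter
        (fun k => i < X k ∧ X (k + 1) = i - ℓ + 1)).card) :
    (T : ℝ) = n + 2 * (∑' i : ℤ, if i ≤ (n : ℤ) - 1 then (V i 1 : ℝ) else 0)
      + ∑ ℓ ∈ Finset.Icc 2 L, ∑' i : ℤ, if i ≤ (n : ℤ) - 1 then (V i ℓ : ℝ) else 0 :=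
  stmt13_general L X hX0 hstep n T hT hTmin V hV
end

section
/- In the setting of the previous negative-multinomial construction with i.i.d. unit vectors (ξ_k) but where the first M vectors ξ_1,…,ξ_M have possibly different distributions q_1,…,q_M on {e_1,…,e_{L+1}} and ξ_k for k > M are i.i.d. with distribution ν̃ (ν̃(e_{L+1}) = ν(1) > 0, ν̃(e_ℓ) = ν(−ℓ)), the count A_ℓ(M−1) of type-ℓ failures before the M-th success satisfies E[A_ℓ(M−1)] = Σ_{i=1}^M ( q_i(−ℓ) + ρ_ℓ·(1 − q_i(1)) ), where ρ_ℓ = ν(−ℓ)/ν(1). -/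
/-!
Let `N_j` be the number of successes among `ξ_1, …, ξ_j` and `a_j = P(N_j < M)`. A visit to a
value `c` at step `j + 1` happens before the `M`-th success exactly when `N_j < M`, an event
independent of `ξ_{j+1}`; hence the expected number of such visits is `∑_j P(ξ_{j+1} = c) a_j`,
which splits as `∑_{i ≤ M} P(ξ_i = c) + ν(c) ∑_{j ≥ M} a_j` because `a_j = 1` for `j < M`.
For `c` the success value this counts `min(M, total number of successes) ≤ M`, so `∑ a_j < ∞`,
the `M`-th success occurs almost surely, and the count is `M` a.s.; this identifies
`ν(1) ∑_{j ≥ M} a_j` with `∑_{i ≤ M} (1 - q_i(1))`.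
-/

open MeasureTheory ProbabilityTheory Finset
open scoped ENNReal

lemma Finset.sum_Icc_one_eq_sum_range {β : Type*} [AddCommMonoid β] (g : ℕ → β) (n : ℕ) :
    ∑ i ∈ Icc 1 n, g i = ∑ j ∈ range n, g (j + 1) := by
  rw [← Ico_add_one_right_eq_Icc, sum_Ico_eq_sum_range, Nat.add_sub_cancel]
  simp only [add_comm 1]

lemma tsum_mul_eq_sum_add_mul_tsum {p a : ℕ → ℝ≥0∞} {M : ℕ} {π : ℝ≥0∞} (ha : ∀ j < M, a j = 1)
    (hp : ∀ j, M ≤ j → p j = π) :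
    ∑' j, p j * a j = ∑ j ∈ range M, p j + π * ∑' j, a (j + M) := by
  rw [← ENNReal.summable.sum_add_tsum_nat_add' (k := M), ← ENNReal.tsum_mul_left]
  congr 1
  · exact sum_congr rfl fun j hj => by rw [ha j (mem_range.mp hj), mul_one]
  · exact tsum_congr fun j => by rw [hp (j + M) (by omega)]

lemma lt_sInf_setOf_eq_iff {f : ℕ → ℕ} {M : ℕ} (h0 : f 0 = 0) (hmono : Monotone f)
    (hstep : ∀ n, f (n + 1) ≤ f n + 1) (hM : 1 ≤ M) (hreach : ∃ n, M ≤ f n) (j : ℕ) :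
    j < sInf {n | 1 ≤ n ∧ f n = M} ↔ f j < M := by
  classical
  have hpos : Nat.find hreach ≠ 0 := fun h => by
    have hafter := Nat.find_spec hreach
    rw [h, h0] at hafter
    omega
  have hhit : f (Nat.find hreach) = M := by
    obtain ⟨m, hm⟩ : ∃ m, Nat.find hreach = m + 1 := Nat.exists_eq_add_one_of_ne_zero hpos
    have hbefore := Nat.find_min hreach (show m < Nat.find hreach by omega)
    have hafter := Nat.find_spec hreach
    rw [hm] at hafter ⊢
    have := hstep m
    omega
  have hfirst : sInf {n | 1 ≤ n ∧ f n = M} = Nat.find hreach :=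
    le_antisymm (Nat.sInf_le ⟨Nat.one_le_iff_ne_zero.mpr hpos, hhit⟩)
      (le_csInf ⟨_, Nat.one_le_iff_ne_zero.mpr hpos, hhit⟩ fun n hn => Nat.find_min' hreach hn.2.ge)
  rw [hfirst, Nat.lt_find_iff]
  exact ⟨fun h => not_le.mp (h j le_rfl), fun h m hm => not_le.mpr ((hmono hm).trans_lt h)⟩

section VisitCount

variable {Ω α : Type*} [DecidableEq α] (ξ : ℕ → Ω → α)

def visitCount (c : α) (n : ℕ) (ω : Ω) : ℕ :=
  #{k ∈ Icc 1 n | ξ k ω = c}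

def visitBefore (s : α) (M : ℕ) (c : α) (j : ℕ) : Set Ω :=
  {ω | ξ (j + 1) ω = c ∧ visitCount ξ s j ω < M}

variable {ξ}

lemma indicator_visitBefore_apply {R : Type*} [Zero R] [One R] (s : α) (M : ℕ) (c : α) (j : ℕ)
    (ω : Ω) : (visitBefore ξ s M c j).indicator (1 : Ω → R) ω
      = if ξ (j + 1) ω = c ∧ visitCount ξ s j ω < M then 1 else 0 := by
  simp [visitBefore, Set.indicator_apply]

lemma visitCount_eq_sum_range (c : α) (n : ℕ) (ω : Ω) :
    visitCount ξ c n ω = ∑ j ∈ range n, if ξ (j + 1) ω = c then 1 else 0 := by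
  rw [visitCount, card_filter, sum_Icc_one_eq_sum_range]

@[simp]
lemma visitCount_zero (c : α) (ω : Ω) : visitCount ξ c 0 ω = 0 := by
  simp [visitCount]

lemma visitCount_succ (c : α) (n : ℕ) (ω : Ω) :
    visitCount ξ c (n + 1) ω = visitCount ξ c n ω + if ξ (n + 1) ω = c then 1 else 0 := by
  simp only [visitCount_eq_sum_range, sum_range_succ]

lemma visitCount_le_self (c : α) (n : ℕ) (ω : Ω) : visitCount ξ c n ω ≤ n :=
  (card_filter_le _ _).trans (by simp)

lemma monotone_visitCount (c : α) (ω : Ω) : Monotone (fun n => visitCount ξ c n ω) :=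
  monotone_nat_of_le_succ fun n => by rw [visitCount_succ]; omega

lemma tsum_indicator_visitBefore_eq_visitCount_sInf {s : α} {M : ℕ} {ω : Ω} (hM : 1 ≤ M)
    (hreach : ∃ n, M ≤ visitCount ξ s n ω) (c : α) :
    ∑' j, (visitBefore ξ s M c j).indicator (1 : Ω → ℝ≥0∞) ω
      = visitCount ξ c (sInf {n | 1 ≤ n ∧ visitCount ξ s n ω = M}) ω := by
  set γ := sInf {n | 1 ≤ n ∧ visitCount ξ s n ω = M}
  have hbefore : ∀ j, visitCount ξ s j ω < M ↔ j < γ := fun j =>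
    (lt_sInf_setOf_eq_iff (visitCount_zero s ω) (monotone_visitCount s ω)
      (fun n => by rw [visitCount_succ]; split_ifs <;> omega) hM hreach j).symm
  rw [tsum_eq_sum (s := range γ), visitCount_eq_sum_range, Nat.cast_sum]
  · refine sum_congr rfl fun j hj => ?_
    simp only [indicator_visitBefore_apply, hbefore, mem_range.mp hj, and_true]
    split_ifs <;> simp
  · intro j hj
    simp [indicator_visitBefore_apply, hbefore, mem_range.not.mp hj]

lemma sum_range_indicator_visitBefore_self (s : α) (M n : ℕ) (ω : Ω) :
    ∑ j ∈ range n, (visitBefore ξ s M s j).indicator (1 : Ω → ℕ) ω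
      = min M (visitCount ξ s n ω) := by
  induction n with
  | zero => simp
  | succ n ih =>
    rw [sum_range_succ, ih, visitCount_succ]
    by_cases hs : ξ (n + 1) ω = s <;> by_cases hlt : visitCount ξ s n ω < M <;>
      simp [indicator_visitBefore_apply, hs, hlt] <;> omega

lemma tsum_indicator_visitBefore_self (s : α) (M : ℕ) (ω : Ω) :
    ∑' j, (visitBefore ξ s M s j).indicator (1 : Ω → ℝ≥0∞) ω
      = ⨆ n, ((min M (visitCount ξ s n ω) : ℕ) : ℝ≥0∞) := by
  rw [ENNReal.tsum_eq_iSup_nat]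
  refine iSup_congr fun n => ?_
  rw [← sum_range_indicator_visitBefore_self, Nat.cast_sum]
  refine sum_congr rfl fun j _ => ?_
  simp only [indicator_visitBefore_apply]
  split_ifs <;> simp

lemma tsum_indicator_visitBefore_self_le (s : α) (M : ℕ) (ω : Ω) :
    ∑' j, (visitBefore ξ s M s j).indicator (1 : Ω → ℝ≥0∞) ω ≤ M := by
  rw [tsum_indicator_visitBefore_self]
  exact iSup_le fun n => by exact_mod_cast min_le_left _ _

lemma tsum_indicator_visitBefore_self_of_le {s : α} {M : ℕ} {ω : Ω} {n : ℕ}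
    (hn : M ≤ visitCount ξ s n ω) :
    ∑' j, (visitBefore ξ s M s j).indicator (1 : Ω → ℝ≥0∞) ω = M :=
  (tsum_indicator_visitBefore_self_le s M ω).antisymm <| by
    rw [tsum_indicator_visitBefore_self]
    exact le_iSup_of_le n (by rw [min_eq_left hn])

lemma measure_visitCount_lt_of_lt [MeasurableSpace Ω] {μ : Measure Ω} [IsProbabilityMeasure μ]
    (s : α) {M j : ℕ} (hj : j < M) : μ {ω | visitCount ξ s j ω < M} = 1 := by
  rw [show {ω | visitCount ξ s j ω < M} = Set.univ from
    Set.eq_univ_of_forall fun ω => (visitCount_le_self s j ω).trans_lt hj, measure_univ]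

end VisitCount

section Probability

variable {Ω α : Type*} [MeasurableSpace Ω] [MeasurableSpace α] [MeasurableSingletonClass α]
  [DecidableEq α] {μ : Measure Ω} {ξ : ℕ → Ω → α}

lemma measurable_visitCount (hξ : ∀ k, Measurable (ξ k)) (c : α) (n : ℕ) :
    Measurable (visitCount ξ c n) := by
  rw [show visitCount ξ c n = _ from funext (visitCount_eq_sum_range c n)]
  exact measurable_sum _ fun j _ =>
    Measurable.ite (hξ _ (measurableSet_singleton c)) measurable_const measurable_const

lemma measurableSet_visitBefore (hξ : ∀ k, Measurable (ξ k)) (s : α) (M : ℕ) (c : α) (j : ℕ) :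
    MeasurableSet (visitBefore ξ s M c j) :=
  (hξ _ (measurableSet_singleton c)).inter (measurable_visitCount hξ s j measurableSet_Iio)

lemma indepFun_visitCount_succ (hindep : iIndepFun ξ μ) (hξ : ∀ k, Measurable (ξ k)) (c : α)
    (n : ℕ) : IndepFun (visitCount ξ c n) (ξ (n + 1)) μ := by
  have hpast := hindep.indepFun_finset (Icc 1 n) {n + 1} (by simp) hξ
  have hcount : Measurable fun v : Icc 1 n → α => ∑ i, if v i = c then 1 else 0 :=
    measurable_sum _ fun i _ => Measurable.ite
      ((measurableSet_singleton c).preimage (measurable_pi_apply i)) measurable_const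
      measurable_const
  convert hpast.comp hcount (measurable_pi_apply ⟨n + 1, mem_singleton_self _⟩) using 1
  · funext ω
    rw [visitCount, card_filter, ← sum_coe_sort]
    rfl
  · rfl

theorem lintegral_tsum_indicator_visitBefore (hindep : iIndepFun ξ μ)
    (hξ : ∀ k, Measurable (ξ k)) (s : α) (M : ℕ) (c : α) :
    ∫⁻ ω, ∑' j, (visitBefore ξ s M c j).indicator 1 ω ∂μ
      = ∑' j, μ (ξ (j + 1) ⁻¹' {c}) * μ {ω | visitCount ξ s j ω < M} := by
  rw [lintegral_tsum fun j => (measurable_one.indicator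
    (measurableSet_visitBefore hξ s M c j)).aemeasurable]
  refine tsum_congr fun j => ?_
  rw [lintegral_indicator_one (measurableSet_visitBefore hξ s M c j), mul_comm]
  exact (indepFun_visitCount_succ hindep hξ s j).measure_inter_preimage_eq_mul _ _
    measurableSet_Iio (measurableSet_singleton c) ▸ congrArg μ (Set.inter_comm _ _)

variable [IsProbabilityMeasure μ]

theorem ae_exists_le_visitCount (hindep : iIndepFun ξ μ) (hξ : ∀ k, Measurable (ξ k)) {s : α}
    {M : ℕ} {π : ℝ≥0∞} (hπ : π ≠ 0) (hp : ∀ k, M < k → μ (ξ k ⁻¹' {s}) = π) :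
    ∀ᵐ ω ∂μ, ∃ n, M ≤ visitCount ξ s n ω := by
  set a := fun j => μ {ω | visitCount ξ s j ω < M}
  have hbound : ∑' j, μ (ξ (j + 1) ⁻¹' {s}) * a j ≤ M := by
    rw [← lintegral_tsum_indicator_visitBefore hindep hξ]
    calc _ ≤ ∫⁻ _, (M : ℝ≥0∞) ∂μ :=
          lintegral_mono fun ω => tsum_indicator_visitBefore_self_le s M ω
      _ = M := by simp
  have htail : π * ∑' j, a (j + M) ≤ M :=
    calc π * ∑' j, a (j + M) = ∑' j, μ (ξ (j + M + 1) ⁻¹' {s}) * a (j + M) := by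
          rw [← ENNReal.tsum_mul_left]
          exact tsum_congr fun j => by rw [hp _ (by omega)]
      _ ≤ ∑' j, μ (ξ (j + 1) ⁻¹' {s}) * a j :=
          ENNReal.tsum_comp_le_tsum_of_injective (add_left_injective M)
            fun j => μ (ξ (j + 1) ⁻¹' {s}) * a j
      _ ≤ M := hbound
  have hfin : ∑' j, a (j + M) ≠ ∞ := fun h => by
    rw [h, ENNReal.mul_top hπ, top_le_iff] at htail
    exact ENNReal.natCast_ne_top M htail
  rw [ae_iff]
  simp only [not_exists, not_le]
  exact le_antisymm (ge_of_tendsto' (ENNReal.tendsto_atTop_zero_of_tsum_ne_top hfin)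
    fun j => measure_mono fun ω hω => hω (j + M)) zero_le

lemma lintegral_tsum_indicator_visitBefore_eq_sum_add (hindep : iIndepFun ξ μ)
    (hξ : ∀ k, Measurable (ξ k)) (s : α) {M : ℕ} {c : α} {π : ℝ≥0∞}
    (hp : ∀ k, M < k → μ (ξ k ⁻¹' {c}) = π) :
    ∫⁻ ω, ∑' j, (visitBefore ξ s M c j).indicator 1 ω ∂μ
      = ∑ j ∈ range M, μ (ξ (j + 1) ⁻¹' {c}) + π * ∑' j, μ {ω | visitCount ξ s (j + M) ω < M} := by
  rw [lintegral_tsum_indicator_visitBefore hindep hξ]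
  exact tsum_mul_eq_sum_add_mul_tsum (fun j hj => measure_visitCount_lt_of_lt s hj)
    fun j hj => hp (j + 1) (by omega)

theorem integral_visitCount_sInf (hindep : iIndepFun ξ μ) (hξ : ∀ k, Measurable (ξ k))
    {s c : α} {M : ℕ} (hM : 1 ≤ M) {πs πc : ℝ} (hπs : 0 < πs)
    (hps : ∀ k, M < k → μ.real (ξ k ⁻¹' {s}) = πs)
    (hpc : ∀ k, M < k → μ.real (ξ k ⁻¹' {c}) = πc) :
    ∫ ω, (visitCount ξ c (sInf {n | 1 ≤ n ∧ visitCount ξ s n ω = M}) ω : ℝ) ∂μ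
      = ∑ i ∈ Icc 1 M, (μ.real (ξ i ⁻¹' {c}) + πc / πs * (1 - μ.real (ξ i ⁻¹' {s}))) := by
  set T := ∑' j, μ {ω | visitCount ξ s (j + M) ω < M}
  have hofReal : ∀ x π, (∀ k, M < k → μ.real (ξ k ⁻¹' {x}) = π) →
      ∀ k, M < k → μ (ξ k ⁻¹' {x}) = ENNReal.ofReal π := fun x π hp k hk => by
    rw [← hp k hk, ofReal_measureReal]
  have hreach := ae_exists_le_visitCount hindep hξ (by simpa using hπs) (hofReal s πs hps)
  have hs : ∑ j ∈ range M, μ (ξ (j + 1) ⁻¹' {s}) + ENNReal.ofReal πs * T = M := by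
    rw [← lintegral_tsum_indicator_visitBefore_eq_sum_add hindep hξ s (hofReal s πs hps),
      lintegral_congr_ae (g := fun _ => (M : ℝ≥0∞))
        (hreach.mono fun ω ⟨n, hn⟩ => tsum_indicator_visitBefore_self_of_le hn)]
    simp
  have hc : ∫ ω, (visitCount ξ c (sInf {n | 1 ≤ n ∧ visitCount ξ s n ω = M}) ω : ℝ) ∂μ
      = (∑ j ∈ range M, μ (ξ (j + 1) ⁻¹' {c}) + ENNReal.ofReal πc * T).toReal := by
    rw [← lintegral_tsum_indicator_visitBefore_eq_sum_add hindep hξ s (hofReal c πc hpc),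
      ← integral_toReal]
    · exact integral_congr_ae (hreach.mono fun ω h => by
        simp [tsum_indicator_visitBefore_eq_visitCount_sInf hM h c])
    · exact (Measurable.tsum fun j => measurable_one.indicator
        (measurableSet_visitBefore hξ s M c j)).aemeasurable
    · exact hreach.mono fun ω h => by
        simp [tsum_indicator_visitBefore_eq_visitCount_sInf hM h c]
  have hT : T ≠ ∞ := fun h => by simp [h, hπs] at hs
  have hπc : 0 ≤ πc := hpc (M + 1) (by omega) ▸ measureReal_nonneg
  have hsR := congrArg ENNReal.toReal hs
  rw [ENNReal.toReal_add (by simp) (ENNReal.mul_ne_top ENNReal.ofReal_ne_top hT),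
    ENNReal.toReal_sum (by simp), ENNReal.toReal_mul, ENNReal.toReal_ofReal hπs.le] at hsR
  rw [hc, ENNReal.toReal_add (by simp) (ENNReal.mul_ne_top ENNReal.ofReal_ne_top hT),
    ENNReal.toReal_sum (by simp), ENNReal.toReal_mul, ENNReal.toReal_ofReal hπc,
    sum_Icc_one_eq_sum_range, sum_add_distrib, ← mul_sum, sum_sub_distrib]
  simp only [sum_const, card_range, nsmul_eq_mul, mul_one, ENNReal.toReal_natCast,
    measureReal_def] at hsR ⊢
  rw [← hsR]
  field_simp
  ring

end Probability

theorem stmt17_general {Ω : Type*} [MeasurableSpace Ω] (μ : Measure Ω) [IsProbabilityMeasure μ]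
    (L : ℕ) (M : ℕ) (hM : 1 ≤ M)
    (ξ : ℕ → Ω → Fin (L + 1))
    (hmeas : ∀ k, Measurable (ξ k))
    (hindep : iIndepFun ξ μ)
    (q1 : ℕ → ℝ) (qneg : ℕ → Fin L → ℝ) (ν1 : ℝ) (νneg : Fin L → ℝ)
    (hν1 : 0 < ν1)
    (hdistq : ∀ i, 1 ≤ i → i ≤ M →
      (∀ ℓ : Fin L, (μ {ω | ξ i ω = Fin.castSucc ℓ}).toReal = qneg i ℓ) ∧
        (μ {ω | ξ i ω = Fin.last L}).toReal = q1 i)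
    (hdistν : ∀ k, M < k →
      (∀ ℓ : Fin L, (μ {ω | ξ k ω = Fin.castSucc ℓ}).toReal = νneg ℓ) ∧
        (μ {ω | ξ k ω = Fin.last L}).toReal = ν1)
    (γ : Ω → ℕ)
    (hγ : ∀ ω, γ ω = sInf {n | 1 ≤ n ∧
      ((Finset.Icc 1 n).filter (fun k => ξ k ω = Fin.last L)).card = M})
    (A : Fin L → Ω → ℕ)
    (hA : ∀ ℓ ω, A ℓ ω =
      ((Finset.Icc 1 (γ ω)).filter (fun k => ξ k ω = Fin.castSucc ℓ)).card)
    (ℓ : Fin L) :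
    ∫ ω, (A ℓ ω : ℝ) ∂μ
      = ∑ i ∈ Finset.Icc 1 M, (qneg i ℓ + (νneg ℓ / ν1) * (1 - q1 i)) := by
  have hAγ : ∀ ω, A ℓ ω = visitCount ξ (Fin.castSucc ℓ)
      (sInf {n | 1 ≤ n ∧ visitCount ξ (Fin.last L) n ω = M}) ω := fun ω => by
    rw [hA, hγ]
    rfl
  simp_rw [hAγ]
  rw [integral_visitCount_sInf hindep hmeas hM hν1 (fun k hk => (hdistν k hk).2)
    (fun k hk => (hdistν k hk).1 ℓ)]
  refine sum_congr rfl fun i hi => ?_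
  obtain ⟨hi1, hiM⟩ := mem_Icc.mp hi
  rw [← (hdistq i hi1 hiM).1 ℓ, ← (hdistq i hi1 hiM).2]
  rfl

theorem stmt17 {Ω : Type*} [MeasurableSpace Ω] (μ : Measure Ω) [IsProbabilityMeasure μ]
    (L : ℕ) (hL : 0 < L) (M : ℕ) (hM : 1 ≤ M)
    (ξ : ℕ → Ω → Fin (L + 1))
    (hmeas : ∀ k, Measurable (ξ k))
    (hindep : iIndepFun ξ μ)
    (q1 : ℕ → ℝ) (qneg : ℕ → Fin L → ℝ) (ν1 : ℝ) (νneg : Fin L → ℝ)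
    (hν1 : 0 < ν1)
    (hdistq : ∀ i, 1 ≤ i → i ≤ M →
      (∀ ℓ : Fin L, (μ {ω | ξ i ω = Fin.castSucc ℓ}).toReal = qneg i ℓ) ∧
        (μ {ω | ξ i ω = Fin.last L}).toReal = q1 i)
    (hdistν : ∀ k, M < k →
      (∀ ℓ : Fin L, (μ {ω | ξ k ω = Fin.castSucc ℓ}).toReal = νneg ℓ) ∧
        (μ {ω | ξ k ω = Fin.last L}).toReal = ν1)
    (γ : Ω → ℕ)
    (hγ : ∀ ω, γ ω = sInf {n | 1 ≤ n ∧
      ((Finset.Icc 1 n).filter (fun k => ξ k ω = Fin.last L)).card = M})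
    (A : Fin L → Ω → ℕ)
    (hA : ∀ ℓ ω, A ℓ ω =
      ((Finset.Icc 1 (γ ω)).filter (fun k => ξ k ω = Fin.castSucc ℓ)).card)
    (ℓ : Fin L) :
    ∫ ω, (A ℓ ω : ℝ) ∂μ
      = ∑ i ∈ Finset.Icc 1 M, (qneg i ℓ + (νneg ℓ / ν1) * (1 - q1 i)) :=
  stmt17_general μ L M hM ξ hmeas hindep q1 qneg ν1 νneg hν1 hdistq hdistν γ hγ A hA ℓ
end
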